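/- arXiv:1710.00603 — 5 statements merged into one kernel-verified Lean document; each statement's English description precedes it below -/
import Mathlib

section
/- For all T ≥ 0, (1/12)·∫_{-T}^{T} (T - |r|)·r·tanh(π r) dr ≤ T³/36 - T/144 + ζ(3)/(16π³). -/
open Real MeasureTheory Set
open scoped Nat

/-!
On `[0, T]` we have `tanh (π r) = 1 - 2 / (exp (2π r) + 1)` and the integrand is even, so the left
side equals `T³/36 - (1/3) ∫₀ᵀ (T - r) r / (exp (2π r) + 1) dr`. As `(T - r) r ≤ 0` for `r > T`,
extending the last integral to `(0, ∞)` can only decrease it. Expanding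
`1 / (exp (b x) + 1) = ∑ (-1)ⁿ exp (-(n + 1) b x)` and integrating termwise gives
`∫₀^∞ xᵏ / (exp (b x) + 1) dx = k! η(k + 1) / b^(k + 1)` with `η(s) = (1 - 2^(1 - s)) ζ(s)`;
with `η(2) = π²/12` and `η(3) = 3 ζ(3)/4` the extended integral is `T/48 - 3 ζ(3)/(16 π³)`.
-/

@[fun_prop]
theorem Real.continuous_tanh : Continuous tanh := by
  simp_rw [funext tanh_eq_sinh_div_cosh]
  exact continuous_sinh.div continuous_cosh fun x => (cosh_pos x).ne'

theorem Real.tanh_eq_one_sub_two_div_exp_add_one (x : ℝ) :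
    tanh x = 1 - 2 / (exp (2 * x) + 1) := by
  have h : exp (2 * x) = exp x * exp x := by rw [two_mul, exp_add]
  rw [tanh_eq, exp_neg, h]
  field_simp
  ring

theorem Function.Even.intervalIntegral_neg_self {f : ℝ → ℝ} (hf : Function.Even f) {T : ℝ}
    (hfi : IntervalIntegrable f volume (-T) T) :
    ∫ x in (-T)..T, f x = 2 * ∫ x in 0..T, f x := by
  have hneg : ∫ x in (-T)..0, f x = ∫ x in 0..T, f x := by
    simpa [hf _] using (intervalIntegral.integral_comp_neg (a := 0) (b := T) f).symm
  have h0 : (0 : ℝ) ∈ uIcc (-T) T := by simp [mem_uIcc, le_total]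
  rw [← intervalIntegral.integral_add_adjacent_intervals
    (hfi.mono_set (uIcc_subset_uIcc left_mem_uIcc h0))
    (hfi.mono_set (uIcc_subset_uIcc h0 right_mem_uIcc)), hneg, two_mul]

theorem integral_sub_mul_self (T : ℝ) : ∫ r in (0 : ℝ)..T, (T - r) * r = T ^ 3 / 6 := by
  simp_rw [sub_mul, ← sq]
  rw [intervalIntegral.integral_sub (by apply Continuous.intervalIntegrable; fun_prop)
    (by apply Continuous.intervalIntegrable; fun_prop), intervalIntegral.integral_const_mul,
    integral_id, integral_pow]
  ring

theorem integral_tent_mul_tanh {T : ℝ} (hT : 0 ≤ T) (c : ℝ) :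
    ∫ r in (-T)..T, (T - |r|) * r * tanh (c * r)
      = T ^ 3 / 3 - 4 * ∫ r in (0 : ℝ)..T, (T - r) * r / (exp (2 * c * r) + 1) := by
  have heven : Function.Even fun r => (T - |r|) * r * tanh (c * r) := fun r => by
    simp only [abs_neg, mul_neg, tanh_neg]
    ring
  have hcont : Continuous fun r => (T - r) * r / (exp (2 * c * r) + 1) :=
    .div (by fun_prop) (by fun_prop) fun r => by positivity
  have hsplit : ∫ r in (0 : ℝ)..T, (T - |r|) * r * tanh (c * r)
      = ∫ r in (0 : ℝ)..T, ((T - r) * r - 2 * ((T - r) * r / (exp (2 * c * r) + 1))) := by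
    refine intervalIntegral.integral_congr fun r hr => ?_
    rw [uIcc_of_le hT] at hr
    rw [abs_of_nonneg hr.1, tanh_eq_one_sub_two_div_exp_add_one, ← mul_assoc]
    ring
  rw [heven.intervalIntegral_neg_self (Continuous.intervalIntegrable (by fun_prop) _ _), hsplit,
    intervalIntegral.integral_sub (Continuous.intervalIntegrable (by fun_prop) _ _)
      ((hcont.intervalIntegrable _ _).const_mul 2),
    intervalIntegral.integral_const_mul, integral_sub_mul_self]
  ring

theorem hasSum_one_div_nat_add_one_pow_riemannZeta {k : ℕ} (hk : 1 < k) :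
    HasSum (fun n : ℕ => 1 / ((n : ℝ) + 1) ^ k) (riemannZeta k).re := by
  have hs : Summable (fun n : ℕ => 1 / ((n : ℝ) + 1) ^ k) := by
    simpa using (summable_nat_add_iff 1).mpr (summable_one_div_nat_pow.mpr hk)
  have hz : riemannZeta k = ((∑' n : ℕ, 1 / ((n : ℝ) + 1) ^ k : ℝ) : ℂ) := by
    rw [zeta_eq_tsum_one_div_nat_add_one_cpow (by simpa using hk), Complex.ofReal_tsum]
    push_cast
    simp [Complex.cpow_natCast]
  rw [hz, Complex.ofReal_re]
  exact hs.hasSum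

theorem hasSum_alternating_one_div_nat_add_one_pow {k : ℕ} {S : ℝ}
    (h : HasSum (fun n : ℕ => 1 / ((n : ℝ) + 1) ^ k) S) :
    HasSum (fun n : ℕ => (-1 : ℝ) ^ n / ((n : ℝ) + 1) ^ k) ((1 - 2 / 2 ^ k) * S) := by
  have hodd : HasSum (fun m : ℕ => 1 / ((↑(2 * m + 1) : ℝ) + 1) ^ k) (S / 2 ^ k) := by
    refine (h.div_const (2 ^ k)).congr_fun fun m => ?_
    rw [div_div, ← mul_pow]
    push_cast
    ring_nf
  have hs : Summable (fun m : ℕ => 1 / ((↑(2 * m) : ℝ) + 1) ^ k) :=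
    h.summable.comp_injective (i := (2 * ·)) (mul_right_injective₀ (two_ne_zero' ℕ))
  have heven : HasSum (fun m : ℕ => 1 / ((↑(2 * m) : ℝ) + 1) ^ k) (S - S / 2 ^ k) := by
    have hsplit := tsum_even_add_odd (f := fun n : ℕ => 1 / ((n : ℝ) + 1) ^ k) hs hodd.summable
    rw [h.tsum_eq, hodd.tsum_eq] at hsplit
    exact hs.hasSum_iff.mpr (by linarith)
  convert HasSum.even_add_odd (f := fun n : ℕ => (-1 : ℝ) ^ n / ((n : ℝ) + 1) ^ k)
    (by simpa [pow_mul] using heven) (by simpa [pow_succ, pow_mul, neg_div] using hodd.neg)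
    using 1
  ring

theorem integral_pow_mul_exp_neg_mul_Ioi (k : ℕ) {c : ℝ} (hc : 0 < c) :
    ∫ x in Ioi 0, x ^ k * exp (-(c * x)) = k ! / c ^ (k + 1) := by
  have h := integral_rpow_mul_exp_neg_mul_Ioi (a := k + 1) (by positivity) hc
  simp only [add_sub_cancel_right, rpow_natCast] at h
  rw [h, Gamma_nat_eq_factorial, ← Nat.cast_add_one, rpow_natCast, one_div, inv_pow,
    inv_mul_eq_div]

theorem integrableOn_pow_mul_exp_neg_mul_Ioi (k : ℕ) {c : ℝ} (hc : 0 < c) :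
    IntegrableOn (fun x : ℝ => x ^ k * exp (-(c * x))) (Ioi 0) :=
  .of_integral_ne_zero (by rw [integral_pow_mul_exp_neg_mul_Ioi k hc]; positivity)

theorem integrableOn_pow_div_exp_add_one_Ioi (k : ℕ) {b : ℝ} (hb : 0 < b) :
    IntegrableOn (fun x : ℝ => x ^ k / (exp (b * x) + 1)) (Ioi 0) := by
  refine (integrableOn_pow_mul_exp_neg_mul_Ioi k hb).mono'
    ((Continuous.div (by fun_prop) (by fun_prop) fun x => by positivity).aestronglyMeasurable) ?_
  filter_upwards [ae_restrict_mem measurableSet_Ioi] with x (hx : 0 < x)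
  rw [norm_of_nonneg (by positivity), div_le_iff₀ (by positivity), mul_assoc, mul_add,
    ← exp_add, neg_add_cancel, exp_zero]
  nlinarith [pow_pos hx k, exp_pos (-(b * x))]

theorem hasSum_neg_one_pow_mul_exp_neg_add_one_mul {t : ℝ} (ht : 0 < t) :
    HasSum (fun n : ℕ => (-1 : ℝ) ^ n * exp (-(((n : ℝ) + 1) * t))) (exp t + 1)⁻¹ := by
  have hr : ‖-exp (-t)‖ < 1 := by
    rw [norm_neg, norm_of_nonneg (exp_pos _).le, exp_lt_one_iff]; linarith
  have hsum : exp (-t) * (1 - -exp (-t))⁻¹ = (exp t + 1)⁻¹ := by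
    have := (exp_pos t).ne'
    rw [sub_neg_eq_add, exp_neg]
    field_simp
  refine (hsum ▸ (hasSum_geometric_of_norm_lt_one hr).mul_left (exp (-t))).congr_fun fun n => ?_
  rw [neg_pow (exp (-t)), ← exp_nat_mul, mul_left_comm, ← exp_add]
  ring_nf

theorem integral_pow_div_exp_add_one_Ioi {k : ℕ} {b S : ℝ} (hb : 0 < b)
    (hS : HasSum (fun n : ℕ => (-1 : ℝ) ^ n / ((n : ℝ) + 1) ^ (k + 1)) S) :
    ∫ x in Ioi 0, x ^ k / (exp (b * x) + 1) = k ! / b ^ (k + 1) * S := by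
  set F : ℕ → ℝ → ℝ := fun n x => (-1) ^ n * (x ^ k * exp (-(((n : ℝ) + 1) * b * x)))
  have hc (n : ℕ) : 0 < ((n : ℝ) + 1) * b := by positivity
  have hF (n : ℕ) :
      ∫ x in Ioi 0, F n x = k ! / b ^ (k + 1) * ((-1) ^ n / ((n : ℝ) + 1) ^ (k + 1)) := by
    rw [integral_const_mul, integral_pow_mul_exp_neg_mul_Ioi k (hc n), mul_pow]
    field_simp
  have hF_norm (n : ℕ) :
      ∫ x in Ioi 0, ‖F n x‖ = |k ! / b ^ (k + 1) * ((-1) ^ n / ((n : ℝ) + 1) ^ (k + 1))| := by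
    rw [← hF, integral_const_mul, abs_mul, abs_of_nonneg (setIntegral_nonneg measurableSet_Ioi
      fun x (hx : 0 < x) => by positivity), ← integral_const_mul]
    refine setIntegral_congr_fun measurableSet_Ioi fun x (hx : 0 < x) => ?_
    rw [norm_mul, Real.norm_eq_abs, norm_of_nonneg (by positivity)]
  have hF_sum : Summable fun n => ∫ x in Ioi 0, ‖F n x‖ :=
    ((hS.mul_left (k ! / b ^ (k + 1))).summable.abs).congr fun n => (hF_norm n).symm
  have hF_int (n : ℕ) : IntegrableOn (F n) (Ioi 0) :=
    (integrableOn_pow_mul_exp_neg_mul_Ioi k (hc n)).const_mul _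
  have hpt (x : ℝ) (hx : x ∈ Ioi 0) : ∑' n, F n x = x ^ k / (exp (b * x) + 1) := by
    rw [div_eq_mul_inv, ← ((hasSum_neg_one_pow_mul_exp_neg_add_one_mul
      (mul_pos hb hx)).mul_left (x ^ k)).tsum_eq]
    congr 1 with n
    simp only [F]
    ring_nf
  have h := hasSum_integral_of_summable_integral_norm hF_int hF_sum
  rw [setIntegral_congr_fun measurableSet_Ioi hpt] at h
  exact h.unique ((hS.mul_left _).congr_fun hF)

theorem integrableOn_sub_mul_div_exp_add_one_Ioi (T : ℝ) {b : ℝ} (hb : 0 < b) :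
    IntegrableOn (fun x => (T - x) * x / (exp (b * x) + 1)) (Ioi 0) :=
  IntegrableOn.congr_fun (((integrableOn_pow_div_exp_add_one_Ioi 1 hb).const_mul T).sub
    (integrableOn_pow_div_exp_add_one_Ioi 2 hb)) (fun x _ => by simp only [Pi.sub_apply]; ring)
    measurableSet_Ioi

theorem integral_sub_mul_div_exp_two_pi_mul_add_one_Ioi (T : ℝ) :
    ∫ x in Ioi 0, (T - x) * x / (exp (2 * π * x) + 1)
      = T / 48 - 3 * (riemannZeta 3).re / (16 * π ^ 3) := by
  have hb : 0 < 2 * π := by positivity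
  have h1 := integral_pow_div_exp_add_one_Ioi (k := 1) hb <|
    hasSum_alternating_one_div_nat_add_one_pow <|
      hasSum_one_div_nat_add_one_pow_riemannZeta (k := 2) one_lt_two
  have h2 := integral_pow_div_exp_add_one_Ioi (k := 2) hb <|
    hasSum_alternating_one_div_nat_add_one_pow <|
      hasSum_one_div_nat_add_one_pow_riemannZeta (k := 3) (by norm_num)
  calc ∫ x in Ioi 0, (T - x) * x / (exp (2 * π * x) + 1)
      = T * (∫ x in Ioi 0, x ^ 1 / (exp (2 * π * x) + 1))
          - ∫ x in Ioi 0, x ^ 2 / (exp (2 * π * x) + 1) := by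
        rw [← integral_const_mul, ← integral_sub
          ((integrableOn_pow_div_exp_add_one_Ioi 1 hb).const_mul T)
          (integrableOn_pow_div_exp_add_one_Ioi 2 hb)]
        congr 1 with x
        ring
    _ = T / 48 - 3 * (riemannZeta 3).re / (16 * π ^ 3) := by
        rw [h1, h2]
        norm_num [riemannZeta_two, ← Complex.ofReal_pow]
        field_simp
        ring

theorem setIntegral_Ioi_le_intervalIntegral {f : ℝ → ℝ} {a b : ℝ} (hab : a ≤ b)
    (hf : IntegrableOn f (Ioi a)) (hf_nonpos : ∀ x ∈ Ioi b, f x ≤ 0) :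
    ∫ x in Ioi a, f x ≤ ∫ x in a..b, f x := by
  rw [← intervalIntegral.integral_Ioi_sub_Ioi hf hab]
  linarith [setIntegral_nonpos (μ := volume) measurableSet_Ioi hf_nonpos]

theorem stmt0 (T : ℝ) (hT : 0 ≤ T) :
    (1/12) * ∫ r in (-T)..T, (T - |r|) * r * Real.tanh (π * r) ≤
      T^3/36 - T/144 + (riemannZeta 3).re / (16 * π^3) := by
  have htail := setIntegral_Ioi_le_intervalIntegral hT
    (integrableOn_sub_mul_div_exp_add_one_Ioi T (b := 2 * π) (by positivity))
    fun x (hx : T < x) => div_nonpos_of_nonpos_of_nonneg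
      (mul_nonpos_of_nonpos_of_nonneg (by linarith) (by linarith)) (by positivity)
  rw [integral_sub_mul_div_exp_two_pi_mul_add_one_Ioi] at htail
  rw [integral_tent_mul_tanh hT]
  linear_combination htail / 3
end

section
/- ∫_0^∞ r·cosh(π r/3)/cosh(π r) dr = 27·L(2,χ_{-3})/(8π²), where L(2,χ_{-3}) = Σ_{n≥1} χ_{-3}(n)/n² and χ_{-3} is the quadratic character mod 3. -/
open Real MeasureTheory

/-- The quadratic character mod 3 as a function on ℕ. -/
noncomputable def chiMinus3 (n : ℕ) : ℝ :=
  if n % 3 = 1 then 1 else if n % 3 = 2 then -1 else 0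

/-!
Expanding `1 / cosh (β r)` as a geometric series in `-exp (-2 β r)` gives, for `r > 0`,
`cosh (α r) / cosh (β r) = ∑ (-1)ⁿ (exp (-((2n+1)β - α) r) + exp (-((2n+1)β + α) r))`.
For `|α| < β` the series is absolutely integrable against `r`, and `∫₀^∞ r e^{-cr} dr = 1 / c²`.
With `α = π/3`, `β = π` this gives `9 / (4π²) · ∑ (-1)ⁿ ((3n+1)⁻² + (3n+2)⁻²)`, and splitting this
alternating series by the parity of `n` shows that it is `3/2 · L(2, χ₋₃)`.
-/

lemma summable_one_div_mul_add_sq {a b : ℝ} (ha : 0 < a) (hb : 0 < b) :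
    Summable fun k : ℕ => 1 / (a * k + b) ^ 2 := by
  have h := ((Real.summable_one_div_nat_add_rpow (b / a) 2).mpr one_lt_two).mul_left (1 / a ^ 2)
  refine h.congr fun k => ?_
  rw [Real.rpow_two, abs_of_pos (by positivity)]
  field_simp

lemma abs_chiMinus3_le_one (n : ℕ) : |chiMinus3 n| ≤ 1 := by
  unfold chiMinus3
  split_ifs <;> norm_num

lemma tsum_chiMinus3_div_sq :
    ∑' n : ℕ, chiMinus3 n / (n : ℝ) ^ 2
      = ∑' k : ℕ, 1 / (3 * (k : ℝ) + 1) ^ 2 - ∑' k : ℕ, 1 / (3 * (k : ℝ) + 2) ^ 2 := by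
  have hsum : Summable fun n : ℕ => chiMinus3 n / (n : ℝ) ^ 2 := by
    refine ((Real.summable_one_div_nat_pow (p := 2)).mpr one_lt_two).of_norm_bounded fun n => ?_
    rw [Real.norm_eq_abs, abs_div, abs_of_nonneg (by positivity : (0:ℝ) ≤ (n:ℝ) ^ 2)]
    exact div_le_div_of_nonneg_right (abs_chiMinus3_le_one n) (by positivity)
  rw [Nat.sumByResidueClasses hsum 3]
  erw [Fin.sum_univ_three]
  simp [ZMod.val, chiMinus3, neg_div, tsum_neg, add_comm _ (3 * _ : ℝ), sub_eq_add_neg]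

lemma hasSum_neg_one_pow_mul_inv_sq_add_inv_sq :
    HasSum (fun k : ℕ => (-1 : ℝ) ^ k * (1 / (3 * (k : ℝ) + 1) ^ 2 + 1 / (3 * (k : ℝ) + 2) ^ 2))
      (3 / 2 * (∑' k : ℕ, 1 / (3 * (k : ℝ) + 1) ^ 2 - ∑' k : ℕ, 1 / (3 * (k : ℝ) + 2) ^ 2)) := by
  have hP := (summable_one_div_mul_add_sq (a := 3) (b := 1) (by norm_num) one_pos).hasSum
  have hQ := (summable_one_div_mul_add_sq (a := 3) (b := 2) (by norm_num) two_pos).hasSum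
  set P := ∑' k : ℕ, 1 / (3 * (k : ℝ) + 1) ^ 2
  set Q := ∑' k : ℕ, 1 / (3 * (k : ℝ) + 2) ^ 2
  -- Subtracting the terms of `L(2, χ₋₃)` leaves `2 / (6k + 2)² = (1/2) / (3k + 1)²` at even
  -- indices and `-2 / (6k + 4)² = -(1/2) / (3k + 2)²` at odd ones: half of `L(2, χ₋₃)` again.
  have hdiff : HasSum (fun k : ℕ => (-1 : ℝ) ^ k * (1 / (3 * (k : ℝ) + 1) ^ 2
      + 1 / (3 * (k : ℝ) + 2) ^ 2) - (1 / (3 * (k : ℝ) + 1) ^ 2 - 1 / (3 * (k : ℝ) + 2) ^ 2))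
      (1 / 2 * P + -(1 / 2) * Q) := by
    refine HasSum.even_add_odd ((hP.mul_left (1 / 2)).congr_fun fun k => ?_)
      ((hQ.mul_left (-(1 / 2))).congr_fun fun k => ?_)
    · rw [pow_mul, neg_one_sq, one_pow]
      push_cast
      field_simp
      ring
    · rw [pow_succ, pow_mul, neg_one_sq, one_pow]
      push_cast
      field_simp
      ring
  convert hdiff.add (hP.sub hQ) using 1
  · ext k; ring
  · ring

lemma hasSum_cosh_div_cosh (a : ℝ) {b : ℝ} (hb : 0 < b) :
    HasSum (fun n : ℕ => (-1 : ℝ) ^ n * (exp (a - (2 * n + 1) * b) + exp (-a - (2 * n + 1) * b)))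
      (cosh a / cosh b) := by
  have hq : |-exp (-(2 * b))| < 1 := by
    rw [abs_neg, abs_of_pos (exp_pos _), exp_lt_one_iff]
    linarith
  have hsum : cosh a / cosh b = (1 - -exp (-(2 * b)))⁻¹ * (exp (a - b) + exp (-a - b)) := by
    rw [sub_neg_eq_add, cosh_eq, cosh_eq, exp_sub, exp_sub, show -(2 * b) = -b + -b by ring,
      exp_add, exp_neg b]
    field_simp
  rw [hsum]
  refine ((hasSum_geometric_of_abs_lt_one hq).mul_right _).congr_fun fun n => ?_
  simp only [neg_pow (exp _), ← exp_nat_mul, mul_add, ← exp_add, mul_assoc]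
  ring_nf

lemma integrableOn_Ioi_mul_exp_neg_mul {c : ℝ} (hc : 0 < c) :
    IntegrableOn (fun r : ℝ => r * exp (-(c * r))) (Set.Ioi 0) := by
  simpa [neg_mul] using integrableOn_rpow_mul_exp_neg_mul_rpow (s := 1) (p := 1) (by norm_num)
    zero_lt_one hc

lemma integral_Ioi_mul_exp_neg_mul {c : ℝ} (hc : 0 < c) :
    ∫ r in Set.Ioi (0 : ℝ), r * exp (-(c * r)) = 1 / c ^ 2 := by
  have h := Real.integral_rpow_mul_exp_neg_mul_Ioi two_pos hc
  norm_num [Real.Gamma_two] at h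
  simpa using h

theorem hasSum_integral_mul_cosh_div_cosh {α β : ℝ} (h : |α| < β) :
    HasSum (fun n : ℕ => (-1 : ℝ) ^ n *
        (1 / ((2 * n + 1) * β - α) ^ 2 + 1 / ((2 * n + 1) * β + α) ^ 2))
      (∫ r in Set.Ioi (0 : ℝ), r * cosh (α * r) / cosh (β * r)) := by
  obtain ⟨hα₁, hα₂⟩ := abs_lt.mp h
  have hβ : 0 < β := (abs_nonneg α).trans_lt h
  have hc₁ (n : ℕ) : 0 < (2 * n + 1) * β - α := by nlinarith [(n.cast_nonneg : (0 : ℝ) ≤ n)]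
  have hc₂ (n : ℕ) : 0 < (2 * n + 1) * β + α := by nlinarith [(n.cast_nonneg : (0 : ℝ) ≤ n)]
  set F : ℕ → ℝ → ℝ := fun n r => (-1) ^ n *
    (r * exp (-(((2 * n + 1) * β - α) * r)) + r * exp (-(((2 * n + 1) * β + α) * r)))
  have hF_int (n : ℕ) : IntegrableOn (F n) (Set.Ioi 0) :=
    ((integrableOn_Ioi_mul_exp_neg_mul (hc₁ n)).add
      (integrableOn_Ioi_mul_exp_neg_mul (hc₂ n))).const_mul _
  have hF_integral (n : ℕ) : ∫ r in Set.Ioi 0, F n r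
      = (-1) ^ n * (1 / ((2 * n + 1) * β - α) ^ 2 + 1 / ((2 * n + 1) * β + α) ^ 2) := by
    rw [integral_const_mul, integral_add (integrableOn_Ioi_mul_exp_neg_mul (hc₁ n))
      (integrableOn_Ioi_mul_exp_neg_mul (hc₂ n)), integral_Ioi_mul_exp_neg_mul (hc₁ n),
      integral_Ioi_mul_exp_neg_mul (hc₂ n)]
  have hF_norm (n : ℕ) : ∫ r in Set.Ioi 0, ‖F n r‖
      = 1 / ((2 * n + 1) * β - α) ^ 2 + 1 / ((2 * n + 1) * β + α) ^ 2 := by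
    rw [← integral_Ioi_mul_exp_neg_mul (hc₁ n), ← integral_Ioi_mul_exp_neg_mul (hc₂ n),
      ← integral_add (integrableOn_Ioi_mul_exp_neg_mul (hc₁ n))
        (integrableOn_Ioi_mul_exp_neg_mul (hc₂ n))]
    refine setIntegral_congr_fun measurableSet_Ioi fun r (hr : 0 < r) => ?_
    rw [Real.norm_eq_abs, abs_mul, abs_neg_one_pow, one_mul, abs_of_pos (by positivity)]
  have hF_sum : Summable fun n : ℕ => ∫ r in Set.Ioi 0, ‖F n r‖ := by
    have h2β : 0 < 2 * β := by positivity
    refine ((summable_one_div_mul_add_sq h2β (sub_pos.mpr hα₂)).add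
      (summable_one_div_mul_add_sq h2β (neg_lt_iff_pos_add.mp hα₁))).congr fun n => ?_
    rw [hF_norm]
    ring
  have hF_tsum : ∀ r ∈ Set.Ioi (0 : ℝ), ∑' n, F n r = r * cosh (α * r) / cosh (β * r) := by
    intro r (hr : 0 < r)
    rw [mul_div_assoc]
    refine (((hasSum_cosh_div_cosh (α * r) (mul_pos hβ hr)).mul_left r).congr_fun
      fun n => ?_).tsum_eq
    simp only [F]
    ring_nf
  rw [← setIntegral_congr_fun measurableSet_Ioi hF_tsum]
  exact (hasSum_integral_of_summable_integral_norm hF_int hF_sum).congr_fun fun n =>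
    (hF_integral n).symm

theorem stmt4 :
    (∫ r in Set.Ioi (0:ℝ), r * Real.cosh (π * r / 3) / Real.cosh (π * r)) =
      27 * (∑' n : ℕ, chiMinus3 n / (n:ℝ)^2) / (8 * π^2) := by
  have hα : |π / 3| < π := by rw [abs_of_pos (by positivity)]; linarith [pi_pos]
  have hint := hasSum_integral_mul_cosh_div_cosh hα
  simp only [div_mul_eq_mul_div] at hint
  have hterm (n : ℕ) : (-1 : ℝ) ^ n * (1 / ((2 * n + 1) * π - π / 3) ^ 2
      + 1 / ((2 * n + 1) * π + π / 3) ^ 2)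
      = 9 / (4 * π ^ 2) * ((-1) ^ n * (1 / (3 * n + 1) ^ 2 + 1 / (3 * n + 2) ^ 2)) := by
    rw [show (2 * n + 1) * π - π / 3 = 2 * π / 3 * (3 * n + 1) by ring,
      show (2 * n + 1) * π + π / 3 = 2 * π / 3 * (3 * n + 2) by ring]
    field_simp
    ring
  rw [tsum_chiMinus3_div_sq, hint.unique
    ((hasSum_neg_one_pow_mul_inv_sq_add_inv_sq.mul_left _).congr_fun hterm)]
  ring
end

section
/- Let φ: ℝ → ℝ be a smooth even function such that x²·φ(x) is absolutely integrable and ∫_ℝ φ(x) dx = 1. Define F(r) = ∫_{-∞}^r ∫_{-∞}^y φ(x) dx dy - max(0, r). Then F is even and absolutely integrable, and its Fourier transform satisfies F̂(t) = (1 - φ̂(t))/(2πt)² for t ≠ 0, where φ̂(t) = ∫_ℝ φ(x)·e^{-2πixt} dx. -/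
open Real MeasureTheory

/-! ### Auxiliary lemmas about the tent function -/

lemma tent_cont (a : ℝ) : Continuous (fun r : ℝ => max 0 (a - |r|)) :=
  continuous_const.max (continuous_const.sub continuous_abs)

lemma tent_eq_indicator (a : ℝ) (ha : 0 ≤ a) :
    (fun r : ℝ => max 0 (a - |r|)) = Set.indicator (Set.Icc (-a) a) (fun r => a - |r|) := by
  funext r
  by_cases h : r ∈ Set.Icc (-a) a
  · rw [Set.indicator_of_mem h]
    rcases h with ⟨h1, h2⟩
    have : |r| ≤ a := abs_le.2 ⟨h1, h2⟩
    exact max_eq_right (by linarith)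
  · rw [Set.indicator_of_notMem h]
    rw [Set.mem_Icc, not_and_or] at h
    have : a < |r| := by
      rcases h with h | h
      · push_neg at h; rw [abs_of_neg (by linarith)]; linarith
      · push_neg at h; rw [abs_of_pos (by linarith)]; linarith
    exact max_eq_left (by linarith)

lemma tent_integral (a : ℝ) (ha : 0 ≤ a) : ∫ r : ℝ, max 0 (a - |r|) = a ^ 2 := by
  rw [tent_eq_indicator a ha, MeasureTheory.integral_indicator measurableSet_Icc,
    MeasureTheory.integral_Icc_eq_integral_Ioc, ← intervalIntegral.integral_of_le (by linarith)]
  have h1 : ∫ r in (0:ℝ)..a, (a - |r|) = a ^ 2 / 2 := by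
    rw [intervalIntegral.integral_congr (g := fun r => a - r)
      (by intro x hx; rw [Set.uIcc_of_le (by linarith)] at hx; simp [abs_of_nonneg hx.1])]
    rw [intervalIntegral.integral_sub intervalIntegrable_const intervalIntegral.intervalIntegrable_id]
    simp [integral_id]
    ring
  have h2 : ∫ r in (-a:ℝ)..0, (a - |r|) = a ^ 2 / 2 := by
    have := intervalIntegral.integral_comp_neg (a := 0) (b := a) (fun r => a - |r|)
    simp only [abs_neg, neg_zero] at this
    rw [← this, h1]
  have hc : Continuous (fun r : ℝ => a - |r|) := continuous_const.sub continuous_abs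
  rw [← intervalIntegral.integral_add_adjacent_intervals (b := 0)
    (hc.intervalIntegrable _ _) (hc.intervalIntegrable _ _), h1, h2]
  ring

lemma tent_integrable (a : ℝ) : Integrable (fun r : ℝ => max 0 (a - |r|)) := by
  rcases le_or_gt 0 a with ha | ha
  · rw [tent_eq_indicator a ha]
    exact (integrable_indicator_iff measurableSet_Icc).2
      ((continuous_const.sub continuous_abs).integrableOn_Icc)
  · have : (fun r : ℝ => max 0 (a - |r|)) = fun _ => 0 := by
      funext r
      exact max_eq_left (by cases abs_cases r <;> linarith)
    rw [this]
    exact integrable_zero _ _ _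

/-! ### The Fourier transform of the tent function -/

lemma exp_deriv_aux (d : ℂ) (r : ℝ) :
    HasDerivAt (fun r : ℝ => Complex.exp (d * r)) (d * Complex.exp (d * r)) r := by
  have h : HasDerivAt (fun z : ℂ => Complex.exp (d * z)) (d * Complex.exp (d * r)) (r : ℂ) := by
    have := (Complex.hasDerivAt_exp (d * r)).comp (r : ℂ) ((hasDerivAt_id (r : ℂ)).const_mul d)
    exact this.congr_deriv (by ring)
  exact h.comp_ofReal

lemma tent_fourier (t : ℝ) (ht : t ≠ 0) (a : ℝ) (ha : 0 ≤ a) :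
    ∫ r : ℝ, ((max 0 (a - |r|) : ℝ) : ℂ) * Complex.exp (((-2 * π * r * t : ℝ) : ℂ) * Complex.I)
      = (((1 - Real.cos (2 * π * a * t)) / (2 * π ^ 2 * t ^ 2) : ℝ) : ℂ) := by
  set d : ℂ := ((-2 * π * t : ℝ) : ℂ) * Complex.I with hd
  have hπ : (π : ℝ) ≠ 0 := Real.pi_ne_zero
  have hdne : d ≠ 0 := by
    simp only [hd, mul_ne_zero_iff, Complex.I_ne_zero, and_true, Complex.ofReal_ne_zero]
    exact ⟨⟨⟨by norm_num, hπ⟩, ht⟩, Complex.I_ne_zero⟩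
  have hE : ∀ r : ℝ, (((-2 * π * r * t : ℝ) : ℂ) * Complex.I) = d * r := by
    intro r; rw [hd]; push_cast; ring
  have key : (fun r : ℝ => ((max 0 (a - |r|) : ℝ) : ℂ) * Complex.exp (((-2 * π * r * t : ℝ) : ℂ) * Complex.I))
      = Set.indicator (Set.Icc (-a) a) (fun r => ((a - |r| : ℝ) : ℂ) * Complex.exp (d * r)) := by
    funext r
    rw [hE r]
    by_cases h : r ∈ Set.Icc (-a) a
    · rw [Set.indicator_of_mem h]
      rcases h with ⟨h1, h2⟩
      have : |r| ≤ a := abs_le.2 ⟨h1, h2⟩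
      rw [max_eq_right (by linarith)]
    · rw [Set.indicator_of_notMem h]
      rw [Set.mem_Icc, not_and_or] at h
      have : a < |r| := by
        rcases h with h | h
        · push_neg at h; rw [abs_of_neg (by linarith)]; linarith
        · push_neg at h; rw [abs_of_pos (by linarith)]; linarith
      rw [max_eq_left (by linarith)]
      simp
  rw [key, MeasureTheory.integral_indicator measurableSet_Icc,
    MeasureTheory.integral_Icc_eq_integral_Ioc, ← intervalIntegral.integral_of_le (by linarith)]
  have hcont : Continuous (fun r : ℝ => ((a - |r| : ℝ) : ℂ) * Complex.exp (d * r)) :=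
    (Complex.continuous_ofReal.comp (continuous_const.sub continuous_abs)).mul
      (Complex.continuous_exp.comp (continuous_const.mul Complex.continuous_ofReal))
  have piece1 : ∫ r in (0:ℝ)..a, ((a - |r| : ℝ) : ℂ) * Complex.exp (d * r)
      = Complex.exp (d * a) / d ^ 2 - (a / d + 1 / d ^ 2) := by
    have hcongr : ∀ x ∈ Set.uIcc (0:ℝ) a,
        ((a - |x| : ℝ) : ℂ) * Complex.exp (d * x) = ((a - x : ℝ) : ℂ) * Complex.exp (d * x) := by
      intro x hx
      rw [Set.uIcc_of_le (by linarith)] at hx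
      rw [abs_of_nonneg hx.1]
    rw [intervalIntegral.integral_congr hcongr]
    have hderiv : ∀ x ∈ Set.uIcc (0:ℝ) a,
        HasDerivAt (fun r : ℝ => ((a - r : ℝ) : ℂ) * Complex.exp (d * r) / d + Complex.exp (d * r) / d ^ 2)
          (((a - x : ℝ) : ℂ) * Complex.exp (d * x)) x := by
      intro x _
      have h1 : HasDerivAt (fun r : ℝ => ((a - r : ℝ) : ℂ)) (((-1 : ℝ) : ℂ)) x :=
        ((hasDerivAt_id x).const_sub a).ofReal_comp
      have h2 := exp_deriv_aux d x
      have h3 := (h1.mul h2).div_const d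
      have h4 := h2.div_const (d ^ 2)
      have := h3.add h4
      refine this.congr_deriv ?_
      rw [div_add_div _ _ hdne (pow_ne_zero 2 hdne), div_eq_iff (mul_ne_zero hdne (pow_ne_zero 2 hdne))]
      push_cast
      ring
    rw [intervalIntegral.integral_eq_sub_of_hasDerivAt hderiv
      (((Complex.continuous_ofReal.comp (continuous_const.sub continuous_id)).mul
        (Complex.continuous_exp.comp (continuous_const.mul Complex.continuous_ofReal))).intervalIntegrable _ _)]
    push_cast
    simp only [sub_self, zero_mul, mul_zero, Complex.exp_zero]
    ring
  have piece2 : ∫ r in (-a:ℝ)..0, ((a - |r| : ℝ) : ℂ) * Complex.exp (d * r)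
      = (a / d - 1 / d ^ 2) + Complex.exp (-(d * a)) / d ^ 2 := by
    have hcongr : ∀ x ∈ Set.uIcc (-a) (0:ℝ),
        ((a - |x| : ℝ) : ℂ) * Complex.exp (d * x) = ((a + x : ℝ) : ℂ) * Complex.exp (d * x) := by
      intro x hx
      rw [Set.uIcc_of_le (by linarith)] at hx
      rw [abs_of_nonpos hx.2]
      ring_nf
    rw [intervalIntegral.integral_congr hcongr]
    have hderiv : ∀ x ∈ Set.uIcc (-a) (0:ℝ),
        HasDerivAt (fun r : ℝ => ((a + r : ℝ) : ℂ) * Complex.exp (d * r) / d - Complex.exp (d * r) / d ^ 2)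
          (((a + x : ℝ) : ℂ) * Complex.exp (d * x)) x := by
      intro x _
      have h1 : HasDerivAt (fun r : ℝ => ((a + r : ℝ) : ℂ)) (((1 : ℝ) : ℂ)) x :=
        ((hasDerivAt_id x).const_add a).ofReal_comp
      have h2 := exp_deriv_aux d x
      have h3 := (h1.mul h2).div_const d
      have h4 := h2.div_const (d ^ 2)
      have := h3.sub h4
      refine this.congr_deriv ?_
      rw [div_sub_div _ _ hdne (pow_ne_zero 2 hdne), div_eq_iff (mul_ne_zero hdne (pow_ne_zero 2 hdne))]
      push_cast
      ring
    rw [intervalIntegral.integral_eq_sub_of_hasDerivAt hderiv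
      (((Complex.continuous_ofReal.comp (continuous_const.add continuous_id)).mul
        (Complex.continuous_exp.comp (continuous_const.mul Complex.continuous_ofReal))).intervalIntegrable _ _)]
    push_cast
    simp only [add_neg_cancel, zero_mul, mul_zero, Complex.exp_zero, mul_neg]
    ring
  have gen : ∀ θ : ℝ, Complex.exp ((θ:ℂ) * Complex.I) + Complex.exp (-((θ:ℂ) * Complex.I))
      = 2 * ((Real.cos θ : ℝ) : ℂ) := by
    intro θ
    rw [show -((θ:ℂ) * Complex.I) = ((-θ : ℝ):ℂ) * Complex.I by push_cast; ring,
      Complex.exp_mul_I, Complex.exp_mul_I]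
    push_cast
    simp [Real.cos_neg, Real.sin_neg]
    ring
  have hexp : Complex.exp (d * a) + Complex.exp (-(d * a)) = 2 * ((Real.cos (2 * π * a * t) : ℝ) : ℂ) := by
    have h1 : d * a = ((-(2 * π * a * t) : ℝ) : ℂ) * Complex.I := by rw [hd]; push_cast; ring
    rw [h1, gen, Real.cos_neg]
  have hd2 : d ^ 2 = ((-(4 * π ^ 2 * t ^ 2) : ℝ) : ℂ) := by
    rw [hd, mul_pow, Complex.I_sq]
    push_cast
    ring
  have hne : ((-(4 * π ^ 2 * t ^ 2) : ℝ) : ℂ) ≠ 0 := by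
    rw [Complex.ofReal_ne_zero]
    intro h
    have : (4 : ℝ) * π ^ 2 * t ^ 2 = 0 := by linarith
    have h4 : (4 : ℝ) * π ^ 2 ≠ 0 := by positivity
    have := (mul_eq_zero.1 this).resolve_left h4
    exact ht (pow_eq_zero_iff (by norm_num)|>.1 this)
  have hne2 : ((2 * π ^ 2 * t ^ 2 : ℝ) : ℂ) ≠ 0 := by
    rw [Complex.ofReal_ne_zero]
    positivity
  have hstep : ∀ (z u v : ℂ), z ≠ 0 →
      (↑a / z - 1 / z ^ 2 + v / z ^ 2 + (u / z ^ 2 - (↑a / z + 1 / z ^ 2)))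
      = (u + v - 2) / z ^ 2 := by
    intro z u v hz
    ring
  rw [← intervalIntegral.integral_add_adjacent_intervals (b := 0)
    (hcont.intervalIntegrable _ _) (hcont.intervalIntegrable _ _), piece1, piece2]
  rw [hstep d (Complex.exp (d * ↑a)) (Complex.exp (-(d * ↑a))) hdne, hexp, hd2,
    Complex.ofReal_div, div_eq_div_iff hne hne2]
  push_cast
  ring

/-! ### Integrability lemmas -/

lemma dominated_by_x2 (φ : ℝ → ℝ) (hc : Continuous φ) (hint : Integrable (fun x => x^2 * φ x))
    (ψ : ℝ → ℝ) (hψm : AEStronglyMeasurable ψ volume)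
    (hbound : ∀ x, |x| ≤ 1 → ‖ψ x‖ ≤ ‖φ x‖) (hbound2 : ∀ x, 1 ≤ |x| → ‖ψ x‖ ≤ ‖x^2 * φ x‖) :
    Integrable ψ := by
  obtain ⟨C, hC⟩ := (isCompact_Icc (a := (-1:ℝ)) (b := 1)).exists_bound_of_continuousOn
    hc.continuousOn
  apply Integrable.mono' (g := fun x => Set.indicator (Set.Icc (-1:ℝ) 1) (fun _ => C) x
    + |x^2 * φ x|)
  · exact ((integrable_indicator_iff measurableSet_Icc).2
      (integrableOn_const measure_Icc_lt_top.ne)).add hint.abs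
  · exact hψm
  · filter_upwards with x
    by_cases h : |x| ≤ 1
    · have hx : x ∈ Set.Icc (-1:ℝ) 1 := abs_le.1 h
      rw [Set.indicator_of_mem hx]
      have := hC x hx
      calc ‖ψ x‖ ≤ ‖φ x‖ := hbound x h
        _ ≤ C := this
        _ ≤ C + |x^2 * φ x| := le_add_of_nonneg_right (abs_nonneg _)
    · push_neg at h
      have hx : x ∉ Set.Icc (-1:ℝ) 1 := fun hmem => absurd (abs_le.2 hmem) (not_le.2 h)
      rw [Set.indicator_of_notMem hx, zero_add]
      exact hbound2 x h.le

lemma phi_integrable (φ : ℝ → ℝ) (hc : Continuous φ) (hint : Integrable (fun x => x^2 * φ x)) :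
    Integrable φ := by
  apply dominated_by_x2 φ hc hint φ hc.aestronglyMeasurable (fun x _ => le_refl _)
  intro x hx
  rw [Real.norm_eq_abs, Real.norm_eq_abs, abs_mul, abs_pow]
  have h2 : 1 ≤ |x| ^ 2 := by nlinarith
  nlinarith [mul_le_mul_of_nonneg_right h2 (abs_nonneg (φ x))]

lemma xphi_integrable (φ : ℝ → ℝ) (hc : Continuous φ) (hint : Integrable (fun x => x^2 * φ x)) :
    Integrable (fun x => x * φ x) := by
  apply dominated_by_x2 φ hc hint _ ((continuous_id.mul hc).aestronglyMeasurable)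
  · intro x hx
    simp only [Pi.mul_apply, id]
    rw [Real.norm_eq_abs, Real.norm_eq_abs, abs_mul]
    nlinarith [abs_nonneg (φ x), abs_nonneg x]
  · intro x hx
    simp only [Pi.mul_apply, id]
    rw [Real.norm_eq_abs, Real.norm_eq_abs, abs_mul, abs_mul, abs_pow]
    have h2 : |x| ≤ |x| ^ 2 := by nlinarith
    nlinarith [mul_le_mul_of_nonneg_right h2 (abs_nonneg (φ x))]

lemma abs_phi_x2 (φ : ℝ → ℝ) (hint : Integrable (fun x => x^2 * φ x)) :
    Integrable (fun x => x^2 * |φ x|) := by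
  have : (fun x : ℝ => x^2 * |φ x|) = fun x => |x^2 * φ x| := by
    funext x
    rw [abs_mul, abs_pow, sq_abs]
  rw [this]
  exact hint.abs

lemma prod_integrable (φ : ℝ → ℝ) (hc : Continuous φ) (hint : Integrable (fun x => x^2 * φ x)) :
    Integrable (fun p : ℝ × ℝ => max 0 (|p.2| - |p.1|) * φ p.2) (volume.prod volume) := by
  have hcontP : Continuous (fun p : ℝ × ℝ => max 0 (|p.2| - |p.1|) * φ p.2) :=
    (continuous_const.max ((continuous_snd.abs).sub (continuous_fst.abs))).mul
      (hc.comp continuous_snd)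
  rw [integrable_prod_iff' hcontP.aestronglyMeasurable]
  constructor
  · filter_upwards with x
    exact (tent_integrable |x|).mul_const (φ x)
  · have heq : (fun x : ℝ => ∫ r : ℝ, ‖max 0 (|x| - |r|) * φ x‖) = fun x => x^2 * |φ x| := by
      funext x
      have : ∀ r : ℝ, ‖max 0 (|x| - |r|) * φ x‖ = max 0 (|x| - |r|) * |φ x| := by
        intro r
        rw [Real.norm_eq_abs, abs_mul, abs_of_nonneg (le_max_left _ _)]
      simp_rw [this]
      rw [MeasureTheory.integral_mul_const, tent_integral |x| (abs_nonneg x), sq_abs]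
    rw [heq]
    exact abs_phi_x2 φ hint

/-! ### Fubini for the double integral -/

lemma vol_toReal (x r : ℝ) : ((volume.restrict (Set.Iic r)) (Set.Ici x)).toReal = max 0 (r - x) := by
  rw [Measure.restrict_apply measurableSet_Ici, Set.Ici_inter_Iic, Real.volume_Icc]
  rcases le_total x r with h | h
  · rw [ENNReal.toReal_ofReal (by linarith), max_eq_right (by linarith)]
  · rw [ENNReal.ofReal_eq_zero.2 (by linarith), ENNReal.toReal_zero,
      max_eq_left (by linarith)]

lemma indicator_swap (φ : ℝ → ℝ) (y x : ℝ) :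
    Set.indicator (Set.Iic y) φ x = Set.indicator (Set.Ici x) (fun _ => φ x) y := by
  simp [Set.indicator_apply, Set.mem_Iic, Set.mem_Ici]

lemma swap1 (φ : ℝ → ℝ) (hc : Continuous φ) (hint : Integrable (fun x => x^2 * φ x)) (r : ℝ) :
    ∫ y in Set.Iic r, ∫ x in Set.Iic y, φ x = ∫ x, max 0 (r - x) * φ x := by
  have hφi : Integrable φ := phi_integrable φ hc hint
  have hxφi : Integrable (fun x => x * φ x) := xphi_integrable φ hc hint
  set f : ℝ → ℝ → ℝ := fun y x => Set.indicator (Set.Ici x) (fun _ => φ x) y with hf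
  have hmeas : AEStronglyMeasurable (Function.uncurry f)
      ((volume.restrict (Set.Iic r)).prod volume) := by
    have : Function.uncurry f = Set.indicator {p : ℝ × ℝ | p.2 ≤ p.1} (fun p => φ p.2) := by
      funext p
      simp [Function.uncurry, hf, Set.indicator_apply, Set.mem_Ici]
    rw [this]
    exact ((hc.comp continuous_snd).stronglyMeasurable.indicator
      (measurableSet_le measurable_snd measurable_fst)).aestronglyMeasurable
  have hintf : Integrable (Function.uncurry f) ((volume.restrict (Set.Iic r)).prod volume) := by
    rw [integrable_prod_iff' hmeas]
    constructor
    · filter_upwards with x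
      show Integrable (fun y => Set.indicator (Set.Ici x) (fun _ => φ x) y) _
      rw [integrable_indicator_iff measurableSet_Ici]
      refine integrableOn_const (ne_of_lt ?_)
      rw [Measure.restrict_apply measurableSet_Ici, Set.Ici_inter_Iic, Real.volume_Icc]
      exact ENNReal.ofReal_lt_top
    · have heq : ∀ x : ℝ, (∫ y, ‖f y x‖ ∂(volume.restrict (Set.Iic r)))
          = max 0 (r - x) * |φ x| := by
        intro x
        show (∫ y, ‖Set.indicator (Set.Ici x) (fun _ => φ x) y‖ ∂(volume.restrict (Set.Iic r))) = _
        have : ∀ y : ℝ, ‖Set.indicator (Set.Ici x) (fun _ => φ x) y‖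
            = Set.indicator (Set.Ici x) (fun _ => |φ x|) y := by
          intro y
          simp [Set.indicator_apply, apply_ite norm]
        simp_rw [this]
        rw [MeasureTheory.integral_indicator measurableSet_Ici]
        rw [setIntegral_const, smul_eq_mul, measureReal_def, vol_toReal]
      have h2 : (fun x : ℝ => ∫ y, ‖Function.uncurry f (y, x)‖ ∂(volume.restrict (Set.Iic r)))
          = fun x => max 0 (r - x) * |φ x| := funext fun x => heq x
      rw [h2]
      apply Integrable.mono' (g := fun x => |r| * |φ x| + |x * φ x|)
      · exact (hφi.abs.const_mul |r|).add hxφi.abs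
      · exact (((continuous_const.max (continuous_const.sub continuous_id)).mul
          hc.abs).aestronglyMeasurable)
      · filter_upwards with x
        rw [Real.norm_eq_abs, abs_mul, abs_of_nonneg (le_max_left _ _), abs_abs, abs_mul]
        have h1 : max 0 (r - x) ≤ |r| + |x| :=
          max_le (by positivity) (by cases abs_cases r <;> cases abs_cases x <;> linarith)
        nlinarith [abs_nonneg (φ x), abs_nonneg x, abs_nonneg r]
  have hswap := MeasureTheory.integral_integral_swap hintf
  have hL : ∫ y in Set.Iic r, ∫ x in Set.Iic y, φ x
      = ∫ y, ∫ x, f y x ∂volume ∂(volume.restrict (Set.Iic r)) := by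
    refine integral_congr_ae ?_
    filter_upwards with y
    rw [← MeasureTheory.integral_indicator measurableSet_Iic]
    exact integral_congr_ae (by filter_upwards with x; exact indicator_swap φ y x)
  have hR : ∫ x, ∫ y, f y x ∂(volume.restrict (Set.Iic r)) ∂volume
      = ∫ x, max 0 (r - x) * φ x := by
    refine integral_congr_ae ?_
    filter_upwards with x
    show (∫ y, Set.indicator (Set.Ici x) (fun _ => φ x) y ∂(volume.restrict (Set.Iic r))) = _
    rw [MeasureTheory.integral_indicator measurableSet_Ici, setIntegral_const, smul_eq_mul,
      measureReal_def, vol_toReal]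
  rw [hL, hswap, hR]

/-! ### Pointwise identity and linear domination -/

lemma max_identity (r x : ℝ) :
    max 0 (r - x) + max 0 (r + x) = max 0 (|x| - |r|) + 2 * max 0 r := by
  rcases abs_cases x with ⟨hx, hx0⟩ | ⟨hx, hx0⟩ <;> rcases abs_cases r with ⟨hr, hr0⟩ | ⟨hr, hr0⟩ <;>
    rw [hx, hr] <;> simp only [max_def] <;> split_ifs <;> linarith

lemma dominated_linear (φ : ℝ → ℝ) (hc : Continuous φ) (hint : Integrable (fun x => x^2 * φ x))
    (c : ℝ) (ψ : ℝ → ℝ) (hm : AEStronglyMeasurable ψ volume)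
    (hb : ∀ x, ‖ψ x‖ ≤ (|c| + |x|) * |φ x|) : Integrable ψ := by
  apply Integrable.mono' (g := fun x => |c| * |φ x| + |x * φ x|)
  · exact ((phi_integrable φ hc hint).abs.const_mul |c|).add (xphi_integrable φ hc hint).abs
  · exact hm
  · filter_upwards with x
    rw [abs_mul]
    calc ‖ψ x‖ ≤ (|c| + |x|) * |φ x| := hb x
      _ = |c| * |φ x| + |x| * |φ x| := by ring

/-! ### Main theorem -/

theorem stmt8 (φ : ℝ → ℝ) (hsmooth : ContDiff ℝ (⊤ : ℕ∞) φ)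
    (heven : ∀ x, φ (-x) = φ x)
    (hint : Integrable (fun x => x^2 * φ x))
    (hmass : ∫ x, φ x = 1)
    (F : ℝ → ℝ)
    (hF : ∀ r, F r = (∫ y in Set.Iic r, ∫ x in Set.Iic y, φ x) - max 0 r) :
    (∀ r, F (-r) = F r) ∧ Integrable F ∧
      ∀ t : ℝ, t ≠ 0 →
        FourierTransform.fourier (fun r => (F r : ℂ)) t =
          (1 - FourierTransform.fourier (fun x => (φ x : ℂ)) t) / (2 * π * t)^2 := by
  have hc : Continuous φ := hsmooth.continuous
  have hφi : Integrable φ := phi_integrable φ hc hint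
  have hπ : (π : ℝ) ≠ 0 := Real.pi_ne_zero
  -- integrability of the tent-times-φ functions
  have htent : ∀ r : ℝ, Integrable (fun x => max 0 (|x| - |r|) * φ x) := by
    intro r
    apply dominated_by_x2 φ hc hint (fun x => max 0 (|x| - |r|) * φ x)
      (((continuous_const.max (continuous_abs.sub continuous_const)).mul hc).aestronglyMeasurable)
    · intro x hx
      rw [Real.norm_eq_abs, Real.norm_eq_abs, abs_mul, abs_of_nonneg (le_max_left _ _)]
      have h1 : max 0 (|x| - |r|) ≤ 1 := max_le zero_le_one (by cases abs_cases r <;> linarith)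
      nlinarith [abs_nonneg (φ x)]
    · intro x hx
      rw [Real.norm_eq_abs, Real.norm_eq_abs, abs_mul, abs_of_nonneg (le_max_left _ _),
        abs_mul, abs_pow]
      have h1 : max 0 (|x| - |r|) ≤ |x| ^ 2 :=
        max_le (by positivity) (by nlinarith [abs_nonneg r, abs_nonneg x])
      nlinarith [abs_nonneg (φ x)]
  -- the closed form of F
  have hFform : ∀ r, F r = 2⁻¹ * ∫ x, max 0 (|x| - |r|) * φ x := by
    intro r
    rw [hF r, swap1 φ hc hint r]
    have i1 : Integrable (fun x => max 0 (r - x) * φ x) := by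
      apply dominated_linear φ hc hint r (fun x => max 0 (r - x) * φ x)
        (((continuous_const.max (continuous_const.sub continuous_id)).mul hc).aestronglyMeasurable)
      intro x
      rw [Real.norm_eq_abs, abs_mul, abs_of_nonneg (le_max_left _ _)]
      have h1 : max 0 (r - x) ≤ |r| + |x| :=
        max_le (by positivity) (by cases abs_cases r <;> cases abs_cases x <;> linarith)
      exact mul_le_mul_of_nonneg_right h1 (abs_nonneg _)
    have i2 : Integrable (fun x => max 0 (r + x) * φ x) := by
      apply dominated_linear φ hc hint r (fun x => max 0 (r + x) * φ x)
        (((continuous_const.max (continuous_const.add continuous_id)).mul hc).aestronglyMeasurable)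
      intro x
      rw [Real.norm_eq_abs, abs_mul, abs_of_nonneg (le_max_left _ _)]
      have h1 : max 0 (r + x) ≤ |r| + |x| :=
        max_le (by positivity) (by cases abs_cases r <;> cases abs_cases x <;> linarith)
      exact mul_le_mul_of_nonneg_right h1 (abs_nonneg _)
    have hsub : ∫ x, max 0 (r + x) * φ x = ∫ x, max 0 (r - x) * φ x := by
      rw [← integral_neg_eq_self (fun x => max 0 (r - x) * φ x) volume]
      refine integral_congr_ae (Filter.Eventually.of_forall fun x => ?_)
      show max 0 (r + x) * φ x = max 0 (r - -x) * φ (-x)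
      rw [sub_neg_eq_add, heven x]
    have key2 : (2:ℝ) * ∫ x, max 0 (r - x) * φ x
        = (∫ x, max 0 (|x| - |r|) * φ x) + 2 * max 0 r := by
      calc (2:ℝ) * ∫ x, max 0 (r - x) * φ x
          = (∫ x, max 0 (r - x) * φ x) + ∫ x, max 0 (r + x) * φ x := by rw [hsub]; ring
        _ = ∫ x, (max 0 (r - x) * φ x + max 0 (r + x) * φ x) := (integral_add i1 i2).symm
        _ = ∫ x, (max 0 (|x| - |r|) * φ x + (2 * max 0 r) * φ x) := by
            refine integral_congr_ae (Filter.Eventually.of_forall fun x => ?_)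
            show max 0 (r - x) * φ x + max 0 (r + x) * φ x
              = max 0 (|x| - |r|) * φ x + 2 * max 0 r * φ x
            rw [← add_mul, max_identity r x, add_mul]
        _ = (∫ x, max 0 (|x| - |r|) * φ x) + ∫ x, (2 * max 0 r) * φ x :=
            integral_add (htent r) (hφi.const_mul _)
        _ = (∫ x, max 0 (|x| - |r|) * φ x) + 2 * max 0 r := by
            rw [MeasureTheory.integral_const_mul, hmass, mul_one]
    linarith [key2]
  refine ⟨fun r => by rw [hFform r, hFform (-r), abs_neg], ?_, ?_⟩
  · have hFe : F = fun r => 2⁻¹ * ∫ x, max 0 (|x| - |r|) * φ x := funext hFform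
    rw [hFe]
    exact ((prod_integrable φ hc hint).integral_prod_left).const_mul 2⁻¹
  · intro t ht
    have hπC : ((π : ℝ) : ℂ) ≠ 0 := Complex.ofReal_ne_zero.2 hπ
    have htC : ((t : ℝ) : ℂ) ≠ 0 := Complex.ofReal_ne_zero.2 ht
    -- integrability of cos / sin multiples
    have hcosi : Integrable (fun x => Real.cos (2 * π * x * t) * φ x) := by
      apply hφi.bdd_mul (c := 1) ((Real.continuous_cos.comp
        ((continuous_const.mul continuous_id).mul continuous_const : Continuous fun x : ℝ => 2 * π * x * t)).aestronglyMeasurable)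
      exact Filter.Eventually.of_forall fun x => by rw [Real.norm_eq_abs]; exact Real.abs_cos_le_one _
    have hsini : Integrable (fun x => Real.sin (-2 * π * x * t) * φ x) := by
      apply hφi.bdd_mul (c := 1) ((Real.continuous_sin.comp
        ((continuous_const.mul continuous_id).mul continuous_const : Continuous fun x : ℝ => -2 * π * x * t)).aestronglyMeasurable)
      exact Filter.Eventually.of_forall fun x => by rw [Real.norm_eq_abs]; exact Real.abs_sin_le_one _
    set C : ℝ := ∫ x, Real.cos (2 * π * x * t) * φ x with hC
    -- the Fourier transform of φ
    have hphihat : FourierTransform.fourier (fun x => (φ x : ℂ)) t = ((C : ℝ) : ℂ) := by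
      rw [Real.fourier_real_eq_integral_exp_smul]
      have hpt : ∀ x : ℝ, Complex.exp (((-2 * π * x * t : ℝ) : ℂ) * Complex.I) • ((φ x : ℝ) : ℂ)
          = ((Real.cos (2 * π * x * t) * φ x : ℝ) : ℂ)
            + ((Real.sin (-2 * π * x * t) * φ x : ℝ) : ℂ) * Complex.I := by
        intro x
        rw [smul_eq_mul, Complex.exp_mul_I, ← Complex.ofReal_cos, ← Complex.ofReal_sin,
          show (-2 * π * x * t : ℝ) = -(2 * π * x * t) by ring, Real.cos_neg]
        push_cast
        ring
      have e1 : (∫ x : ℝ, ((Real.cos (2 * π * x * t) * φ x : ℝ) : ℂ)) = ((C : ℝ) : ℂ) :=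
        integral_ofReal
      have e2 : (∫ x : ℝ, ((Real.sin (-2 * π * x * t) * φ x : ℝ) : ℂ))
          = ((∫ x, Real.sin (-2 * π * x * t) * φ x : ℝ) : ℂ) := integral_ofReal
      rw [integral_congr_ae (Filter.Eventually.of_forall hpt),
        show (∫ x : ℝ, (((Real.cos (2 * π * x * t) * φ x : ℝ) : ℂ)
            + ((Real.sin (-2 * π * x * t) * φ x : ℝ) : ℂ) * Complex.I))
          = (∫ x : ℝ, ((Real.cos (2 * π * x * t) * φ x : ℝ) : ℂ))
            + ∫ x : ℝ, (((Real.sin (-2 * π * x * t) * φ x : ℝ) : ℂ) * Complex.I)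
          from integral_add hcosi.ofReal (hsini.ofReal.mul_const Complex.I),
        MeasureTheory.integral_mul_const, e1, e2]
      have hodd : ∫ x, Real.sin (-2 * π * x * t) * φ x = 0 := by
        have h := integral_neg_eq_self (fun x => Real.sin (-2 * π * x * t) * φ x) volume
        have h2 : (fun x : ℝ => Real.sin (-2 * π * (-x) * t) * φ (-x))
            = fun x => -(Real.sin (-2 * π * x * t) * φ x) := by
          funext x
          rw [heven x, show (-2 * π * (-x) * t : ℝ) = -(-2 * π * x * t) by ring, Real.sin_neg]
          ring
        rw [h2, integral_neg] at h
        linarith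
      rw [hodd]
      simp
    -- compute the Fourier transform of F
    have hpt2 : ∀ (z : ℂ) (g : ℝ → ℝ),
        z * ((2⁻¹ * ∫ x, g x : ℝ) : ℂ) = 2⁻¹ * ∫ x, z * ((g x : ℝ) : ℂ) := by
      intro z g
      rw [Complex.ofReal_mul, MeasureTheory.integral_const_mul,
        show ((∫ x, g x : ℝ) : ℂ) = ∫ x, ((g x : ℝ) : ℂ) from integral_ofReal.symm]
      push_cast
      ring
    have hprodC : Integrable (Function.uncurry fun r x : ℝ =>
        Complex.exp (((-2 * π * r * t : ℝ) : ℂ) * Complex.I)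
          * ((max 0 (|x| - |r|) * φ x : ℝ) : ℂ)) (volume.prod volume) := by
      have : Integrable (fun p : ℝ × ℝ =>
          Complex.exp (((-2 * π * p.1 * t : ℝ) : ℂ) * Complex.I)
            * ((max 0 (|p.2| - |p.1|) * φ p.2 : ℝ) : ℂ)) (volume.prod volume) := by
        apply Integrable.bdd_mul (c := 1) ((prod_integrable φ hc hint).ofReal)
        · exact (Complex.continuous_exp.comp
            ((Complex.continuous_ofReal.comp
              (((continuous_const.mul continuous_fst).mul continuous_const : Continuous fun p : ℝ × ℝ => -2 * π * p.1 * t))).mul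
                continuous_const)).aestronglyMeasurable
        · exact Filter.Eventually.of_forall fun p => le_of_eq (by
            rw [Complex.norm_exp_ofReal_mul_I])
      exact this
    have hswap := MeasureTheory.integral_integral_swap hprodC
    have hxint : ∀ x : ℝ,
        (∫ r : ℝ, Complex.exp (((-2 * π * r * t : ℝ) : ℂ) * Complex.I)
          * ((max 0 (|x| - |r|) * φ x : ℝ) : ℂ))
        = ((φ x * ((1 - Real.cos (2 * π * x * t)) / (2 * π ^ 2 * t ^ 2)) : ℝ) : ℂ) := by
      intro x
      have h1 : ∀ r : ℝ, Complex.exp (((-2 * π * r * t : ℝ) : ℂ) * Complex.I)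
          * ((max 0 (|x| - |r|) * φ x : ℝ) : ℂ)
          = ((φ x : ℝ) : ℂ) * (((max 0 (|x| - |r|) : ℝ) : ℂ)
              * Complex.exp (((-2 * π * r * t : ℝ) : ℂ) * Complex.I)) := by
        intro r
        push_cast
        ring
      rw [integral_congr_ae (Filter.Eventually.of_forall h1), MeasureTheory.integral_const_mul,
        tent_fourier t ht |x| (abs_nonneg x), ← Complex.ofReal_mul]
      congr 1
      have hcosabs : Real.cos (2 * π * |x| * t) = Real.cos (2 * π * x * t) := by
        rcases abs_cases x with ⟨h, _⟩ | ⟨h, _⟩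
        · rw [h]
        · rw [h, show (2 * π * -x * t : ℝ) = -(2 * π * x * t) by ring, Real.cos_neg]
      rw [hcosabs]
    have hreal : ∫ x, φ x * ((1 - Real.cos (2 * π * x * t)) / (2 * π ^ 2 * t ^ 2))
        = (1 - C) / (2 * π ^ 2 * t ^ 2) := by
      have he : (fun x => φ x * ((1 - Real.cos (2 * π * x * t)) / (2 * π ^ 2 * t ^ 2)))
          = fun x => (2 * π ^ 2 * t ^ 2)⁻¹ * (φ x - Real.cos (2 * π * x * t) * φ x) := by
        funext x
        field_simp
      rw [he, MeasureTheory.integral_const_mul, integral_sub hφi hcosi, hmass, ← hC]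
      field_simp
    have hFhat : FourierTransform.fourier (fun r => (F r : ℂ)) t
        = (2⁻¹ : ℂ) * (((1 - C) / (2 * π ^ 2 * t ^ 2) : ℝ) : ℂ) := by
      rw [Real.fourier_real_eq_integral_exp_smul]
      have step1 : ∀ r : ℝ, Complex.exp (((-2 * π * r * t : ℝ) : ℂ) * Complex.I) • ((F r : ℝ) : ℂ)
          = 2⁻¹ * ∫ x : ℝ, Complex.exp (((-2 * π * r * t : ℝ) : ℂ) * Complex.I)
              * ((max 0 (|x| - |r|) * φ x : ℝ) : ℂ) := by
        intro r
        rw [smul_eq_mul, hFform r, hpt2]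
      rw [integral_congr_ae (Filter.Eventually.of_forall step1),
        MeasureTheory.integral_const_mul, hswap,
        integral_congr_ae (Filter.Eventually.of_forall hxint),
        show (∫ x : ℝ, ((φ x * ((1 - Real.cos (2 * π * x * t)) / (2 * π ^ 2 * t ^ 2)) : ℝ) : ℂ))
          = ((∫ x, φ x * ((1 - Real.cos (2 * π * x * t)) / (2 * π ^ 2 * t ^ 2)) : ℝ) : ℂ)
          from integral_ofReal, hreal]
    rw [hFhat, hphihat]
    push_cast
    field_simp [hπC, htC]
end

section
/- For every real z > 0, the quantity -z·ψ'(1/2 + z) + 1 - 1/(12z²) lies in the interval [-7/(120 z⁴), 0], where ψ' is the trigamma function. -/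
set_option maxHeartbeats 1000000


open Real

private lemma telescope_sum (z : ℝ) (hz : 0 < z) (k : ℕ) (hk : 0 < k) :
    HasSum (fun n : ℕ => 1/((n:ℝ)+z)^k - 1/((n:ℝ)+1+z)^k) (1/z^k) := by
  set a : ℕ → ℝ := fun n => 1/((n:ℝ)+z)^k with ha_def
  have hfa : ∀ n : ℕ, 1/((n:ℝ)+z)^k - 1/((n:ℝ)+1+z)^k = a n - a (n+1) := by
    intro n; simp only [ha_def]; push_cast; ring_nf
  have hpos : ∀ n : ℕ, (0:ℝ) < (n:ℝ) + z := fun n => by positivity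
  have hnonneg : ∀ n : ℕ, 0 ≤ 1/((n:ℝ)+z)^k - 1/((n:ℝ)+1+z)^k := by
    intro n
    have h1 : (0:ℝ) < (n:ℝ) + z := hpos n
    have hle : ((n:ℝ)+z)^k ≤ ((n:ℝ)+1+z)^k :=
      pow_le_pow_left₀ h1.le (by linarith) k
    have : (1:ℝ)/((n:ℝ)+1+z)^k ≤ 1/((n:ℝ)+z)^k :=
      one_div_le_one_div_of_le (pow_pos h1 k) hle
    linarith
  rw [hasSum_iff_tendsto_nat_of_nonneg hnonneg]
  have hps : ∀ N : ℕ, ∑ i ∈ Finset.range N, (1/((i:ℝ)+z)^k - 1/((i:ℝ)+1+z)^k)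
      = a 0 - a N := by
    intro N
    rw [show (∑ i ∈ Finset.range N, (1/((i:ℝ)+z)^k - 1/((i:ℝ)+1+z)^k))
        = ∑ i ∈ Finset.range N, (a i - a (i+1)) from Finset.sum_congr rfl
        (fun i _ => hfa i)]
    exact Finset.sum_range_sub' a N
  have ha0 : a 0 = 1/z^k := by simp [ha_def]
  have htend : Filter.Tendsto a Filter.atTop (nhds 0) := by
    have h1 : Filter.Tendsto (fun n : ℕ => (n:ℝ) + z) Filter.atTop Filter.atTop :=
      Filter.tendsto_atTop_add_const_right _ z tendsto_natCast_atTop_atTop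
    have h2 : Filter.Tendsto (fun n : ℕ => ((n:ℝ) + z)^k) Filter.atTop Filter.atTop :=
      (Filter.tendsto_pow_atTop hk.ne').comp h1
    have h3 : Filter.Tendsto (fun n : ℕ => (((n:ℝ) + z)^k)⁻¹) Filter.atTop (nhds 0) :=
      tendsto_inv_atTop_zero.comp h2
    simpa [ha_def, one_div] using h3
  have : Filter.Tendsto (fun N : ℕ => a 0 - a N) Filter.atTop (nhds (a 0 - 0)) :=
    tendsto_const_nhds.sub htend
  rw [sub_zero] at this
  rw [← ha0]
  exact this.congr (fun N => (hps N).symm)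

private lemma key1 (t : ℝ) (ht : 0 < t) :
    (1/t - 1/(t+1)) - (1/12)*(1/t^3 - 1/(t+1)^3) ≤ 1/(t+1/2)^2 := by
  have h1 : (0:ℝ) < t + 1 := by linarith
  have h2 : (0:ℝ) < t + 1/2 := by linarith
  have key : 1/(t+1/2)^2 - ((1/t - 1/(t+1)) - (1/12)*(1/t^3 - 1/(t+1)^3))
      = (7*(t*(t+1))+1)/(12*(t*(t+1))^3*(4*(t*(t+1))+1)) := by
    field_simp
    ring
  have hnn : (0:ℝ) ≤ (7*(t*(t+1))+1)/(12*(t*(t+1))^3*(4*(t*(t+1))+1)) := by positivity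
  linarith

private lemma key2 (t : ℝ) (ht : 0 < t) :
    1/(t+1/2)^2 ≤ (1/t - 1/(t+1)) - (1/12)*(1/t^3 - 1/(t+1)^3)
      + (7/120)*(1/t^5 - 1/(t+1)^5) := by
  have h1 : (0:ℝ) < t + 1 := by linarith
  have h2 : (0:ℝ) < t + 1/2 := by linarith
  have key : ((1/t - 1/(t+1)) - (1/12)*(1/t^3 - 1/(t+1)^3)
        + (7/120)*(1/t^5 - 1/(t+1)^5)) - 1/(t+1/2)^2
      = (70*(t*(t+1))^3+165*(t*(t+1))^2+63*(t*(t+1))+7)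
        /(120*(t*(t+1))^5*(4*(t*(t+1))+1)) := by
    field_simp
    ring
  have hnn : (0:ℝ) ≤ (70*(t*(t+1))^3+165*(t*(t+1))^2+63*(t*(t+1))+7)
        /(120*(t*(t+1))^5*(4*(t*(t+1))+1)) := by positivity
  linarith

private lemma key0 (t : ℝ) (ht : 0 < t) :
    1/(t+1/2)^2 ≤ 1/t - 1/(t+1) := by
  have h1 : (0:ℝ) < t + 1 := by linarith
  have h2 : (0:ℝ) < t + 1/2 := by linarith
  have key : (1/t - 1/(t+1)) - 1/(t+1/2)^2
      = (1/4)/((t*(t+1))*(t+1/2)^2) := by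
    field_simp
    ring
  have hnn : (0:ℝ) ≤ (1/4)/((t*(t+1))*(t+1/2)^2) := by positivity
  linarith

/-- The trigamma function on `(0, ∞)`: `ψ'(x) = ∑' n ≥ 0, 1/(n+x)²`. -/
noncomputable def trigamma (x : ℝ) : ℝ := ∑' n : ℕ, 1 / ((n : ℝ) + x)^2

theorem stmt16 (z : ℝ) (hz : 0 < z) :
    -z * trigamma (1/2 + z) + 1 - 1/(12 * z^2) ∈
      Set.Icc (-7 / (120 * z^4)) 0 := by
  have hpos : ∀ n : ℕ, (0:ℝ) < (n:ℝ) + z := fun n => by positivity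
  have hx : ∀ n : ℕ, (n:ℝ) + (1/2 + z) = ((n:ℝ) + z) + 1/2 := fun n => by ring
  have hy : ∀ n : ℕ, (n:ℝ) + 1 + z = ((n:ℝ) + z) + 1 := fun n => by ring
  have B1 := telescope_sum z hz 1 one_pos
  have B3 := telescope_sum z hz 3 (by norm_num)
  have B5 := telescope_sum z hz 5 (by norm_num)
  -- summability of the trigamma series
  have hsummable : Summable (fun n : ℕ => 1/((n:ℝ) + (1/2 + z))^2) := by
    refine Summable.of_nonneg_of_le (fun n => by positivity) (fun n => ?_) B1.summable
    have h := key0 ((n:ℝ)+z) (hpos n)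
    rw [hx n, hy n]
    simpa using h
  have hT : HasSum (fun n : ℕ => 1/((n:ℝ) + (1/2 + z))^2) (trigamma (1/2 + z)) :=
    hsummable.hasSum
  -- lower bound
  have hg : HasSum (fun n : ℕ =>
      (1/((n:ℝ)+z)^1 - 1/((n:ℝ)+1+z)^1) - (1/12)*(1/((n:ℝ)+z)^3 - 1/((n:ℝ)+1+z)^3))
      (1/z^1 - (1/12)*(1/z^3)) := B1.sub (B3.mul_left (1/12))
  have hlow : 1/z^1 - (1/12)*(1/z^3) ≤ trigamma (1/2 + z) := by
    refine hasSum_le (fun n => ?_) hg hT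
    have h := key1 ((n:ℝ)+z) (hpos n)
    rw [hx n, hy n]
    simpa using h
  -- upper bound
  have hG : HasSum (fun n : ℕ =>
      ((1/((n:ℝ)+z)^1 - 1/((n:ℝ)+1+z)^1) - (1/12)*(1/((n:ℝ)+z)^3 - 1/((n:ℝ)+1+z)^3))
        + (7/120)*(1/((n:ℝ)+z)^5 - 1/((n:ℝ)+1+z)^5))
      ((1/z^1 - (1/12)*(1/z^3)) + (7/120)*(1/z^5)) :=
    (B1.sub (B3.mul_left (1/12))).add (B5.mul_left (7/120))
  have hhigh : trigamma (1/2 + z) ≤ (1/z^1 - (1/12)*(1/z^3)) + (7/120)*(1/z^5) := by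
    refine hasSum_le (fun n => ?_) hT hG
    have h := key2 ((n:ℝ)+z) (hpos n)
    rw [hx n, hy n]
    simpa using h
  have hz' : z ≠ 0 := hz.ne'
  have e1 : z * (1/z^1 - (1/12)*(1/z^3)) = 1 - 1/(12*z^2) := by
    field_simp
  have e2 : z * ((1/z^1 - (1/12)*(1/z^3)) + (7/120)*(1/z^5))
      = 1 - 1/(12*z^2) + 7/(120*z^4) := by
    field_simp
  have m1 := mul_le_mul_of_nonneg_left hlow hz.le
  have m2 := mul_le_mul_of_nonneg_left hhigh hz.le
  rw [e1] at m1
  rw [e2] at m2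
  have e3 : (-7:ℝ)/(120*z^4) = -(7/(120*z^4)) := by ring
  constructor
  · rw [e3]; linarith
  · linarith
end

section
/- For all real r > 0 and δ > 0 with δ²r² ≥ 1/12, we have 2·sinc²(πδr) + sinc²(πδr + π/2) + sinc²(πδr - π/2) ≥ 2/(π²δ²r²), where sinc(x) = sin(x)/x (with sinc(0)=1). -/
open Real

/-- The unnormalized sinc function: `sin x / x`, with value `1` at `0`. -/
noncomputable def sinc' (x : ℝ) : ℝ := if x = 0 then 1 else Real.sin x / x

theorem stmt17 (r δ : ℝ) (hr : 0 < r) (hδ : 0 < δ) (h : 1/12 ≤ δ^2 * r^2) :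
    2 / (π^2 * δ^2 * r^2) ≤
      2 * (sinc' (π * δ * r))^2 + (sinc' (π * δ * r + π/2))^2 +
        (sinc' (π * δ * r - π/2))^2 := by
  have hπ := Real.pi_pos
  set u := π * δ * r with hu
  have hu0 : 0 < u := by positivity
  have hu2 : π^2/12 ≤ u^2 := by
    have h1 : u^2 = π^2 * (δ^2 * r^2) := by rw [hu]; ring
    nlinarith [sq_nonneg π]
  have hlhs : 2 / (π^2 * δ^2 * r^2) = 2 / u^2 := by
    rw [hu]; ring_nf
  rw [hlhs]
  have hune : u ≠ 0 := ne_of_gt hu0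
  have hsu : sinc' u = Real.sin u / u := by rw [sinc', if_neg hune]
  have hp : u + π/2 ≠ 0 := by positivity
  have hsp : sinc' (u + π/2) = Real.cos u / (u + π/2) := by
    rw [sinc', if_neg hp, Real.sin_add_pi_div_two]
  by_cases hm : u = π/2
  · -- then sinc'(u - π/2) = sinc' 0 = 1, and 2/u² = 8/π² ≤ 1
    have hsm : sinc' (u - π/2) = 1 := by rw [hm, sub_self, sinc', if_pos rfl]
    have h1 : 2 / u^2 ≤ 1 := by
      rw [hm, div_le_one (by positivity)]
      nlinarith [Real.pi_gt_three]
    have h2 : (0:ℝ) ≤ 2 * (sinc' u)^2 + (sinc' (u + π/2))^2 := by positivity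
    rw [hsm]; nlinarith
  · have hm' : u - π/2 ≠ 0 := sub_ne_zero.mpr hm
    have hsm : sinc' (u - π/2) = -Real.cos u / (u - π/2) := by
      rw [sinc', if_neg hm', Real.sin_sub_pi_div_two]
    rw [hsu, hsp, hsm]
    have hkey : 2 / u^2 ≤ 1 / (u + π/2)^2 + 1 / (u - π/2)^2 := by
      have hp2 : (0:ℝ) < (u + π/2)^2 := by positivity
      have hm2 : (0:ℝ) < (u - π/2)^2 := by positivity
      rw [div_add_div _ _ (ne_of_gt hp2) (ne_of_gt hm2),
        div_le_div_iff₀ (by positivity) (by positivity)]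
      nlinarith [mul_le_mul_of_nonneg_left hu2 (sq_nonneg π)]
    have hsin : Real.sin u ^ 2 = 1 - Real.cos u ^ 2 := by
      nlinarith [Real.sin_sq_add_cos_sq u]
    have hc2 : (0:ℝ) ≤ Real.cos u ^ 2 := sq_nonneg _
    have hstep : Real.cos u ^ 2 * (2 / u^2) ≤
        Real.cos u ^ 2 * (1 / (u + π/2)^2 + 1 / (u - π/2)^2) :=
      mul_le_mul_of_nonneg_left hkey hc2
    have hu2' : (0:ℝ) < u^2 := by positivity
    have e1 : (Real.sin u / u)^2 = Real.sin u ^2 / u^2 := by rw [div_pow]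
    have e2 : (Real.cos u / (u + π/2))^2 = Real.cos u ^2 / (u + π/2)^2 := by rw [div_pow]
    have e3 : (-Real.cos u / (u - π/2))^2 = Real.cos u ^2 / (u - π/2)^2 := by
      rw [div_pow, neg_pow]; ring
    rw [e1, e2, e3, hsin]
    have expand : Real.cos u ^ 2 * (1 / (u + π/2)^2 + 1 / (u - π/2)^2)
        = Real.cos u ^2 / (u + π/2)^2 + Real.cos u ^2 / (u - π/2)^2 := by ring
    have expand2 : 2 * ((1 - Real.cos u ^ 2) / u ^ 2)
        = 2 / u^2 - Real.cos u ^ 2 * (2 / u^2) := by ring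
    linarith [hstep, expand ▸ hstep]
end
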